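/- With G, M, and the sets X_i as in the previous statement: if i is odd then X_i·M ⊆ X_i, and if i is even then X_i·M ⊆ X_{i−1} ∪ X_i ∪ X_{i+1}. -/
import Mathlib


open Pointwise

/-- The `m`-fold alternating elementwise product `M · M⁻¹ · M · … · M^{(−1)^{m−1}}`
of a subset `M` of a group (with `altProd M 0 = {1}`). -/
def altProd {G : Type*} [Group G] (M : Set G) : ℕ → Set G
  | 0 => {1}
  | m + 1 => altProd M m * (if Even m then M else M⁻¹)

/-- `X_i` is the `i`-fold alternating product minus the `(i−1)`-fold one, except `X₁ = M`. -/
def layer {G : Type*} [Group G] (M : Set G) (i : ℕ) : Set G :=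
  if i = 1 then M else altProd M i \ altProd M (i - 1)

section Aux

variable {G : Type*} [Group G] (M : Submonoid G)

lemma altProd_succ_even {m : ℕ} (h : Even m) (S : Set G) :
    altProd S (m + 1) = altProd S m * S := by
  simp [altProd, h]

lemma altProd_succ_odd {m : ℕ} (h : ¬ Even m) (S : Set G) :
    altProd S (m + 1) = altProd S m * S⁻¹ := by
  simp [altProd, h]

lemma altProd_mono_succ (j : ℕ) : altProd (M : Set G) j ⊆ altProd (M : Set G) (j + 1) := by
  intro x hx
  by_cases h : Even j
  · rw [altProd_succ_even h]
    simpa using Set.mul_mem_mul hx M.one_mem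
  · rw [altProd_succ_odd h]
    have : (1 : G) ∈ (M : Set G)⁻¹ := by simp [M.one_mem]
    simpa using Set.mul_mem_mul hx this

lemma coe_mul_self_subset : (M : Set G) * (M : Set G) ⊆ (M : Set G) := by
  rintro x ⟨a, ha, b, hb, rfl⟩
  exact M.mul_mem ha hb

lemma altProd_odd_mul {i : ℕ} (h : Odd i) :
    altProd (M : Set G) i * (M : Set G) ⊆ altProd (M : Set G) i := by
  obtain ⟨k, rfl⟩ := h
  rw [altProd_succ_even (even_two_mul k), mul_assoc]
  exact Set.mul_subset_mul_left (coe_mul_self_subset M)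

lemma altProd_even_mul_inv {i : ℕ} (h : Even i) (h0 : i ≠ 0) :
    altProd (M : Set G) i * (M : Set G)⁻¹ ⊆ altProd (M : Set G) i := by
  obtain ⟨k, rfl⟩ : ∃ k, i = k + 1 := ⟨i - 1, by omega⟩
  have hk : ¬ Even k := by
    intro hk
    exact (Nat.even_add_one.mp h) hk
  rw [altProd_succ_odd hk, mul_assoc]
  refine Set.mul_subset_mul_left ?_
  rintro x ⟨a, ha, b, hb, rfl⟩
  simp only [Set.mem_inv, mul_inv_rev, SetLike.mem_coe] at *
  exact M.mul_mem hb ha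

/-- cancellation: if `x * m ∈ P_j` with `j` even, nonzero, and `m ∈ M`, then `x ∈ P_j`. -/
lemma cancel_even {j : ℕ} (h : Even j) (h0 : j ≠ 0) {x m : G} (hm : m ∈ M)
    (hxm : x * m ∈ altProd (M : Set G) j) : x ∈ altProd (M : Set G) j := by
  have : x = (x * m) * m⁻¹ := by group
  rw [this]
  exact altProd_even_mul_inv M h h0 (Set.mul_mem_mul hxm (Set.inv_mem_inv.2 hm))

end Aux

/-- If `i` is odd then `X_i · M ⊆ X_i`, and if `i` is even then
`X_i · M ⊆ X_{i−1} ∪ X_i ∪ X_{i+1}`. -/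
theorem layer_mul_submonoid {G : Type*} [Group G] (M : Submonoid G) (n : ℕ) (hn : 0 < n)
    (htop : altProd (M : Set G) n = Set.univ)
    (hne : altProd (M : Set G) (n - 1) ≠ Set.univ) :
    (∀ i : ℕ, Odd i → layer (M : Set G) i * (M : Set G) ⊆ layer (M : Set G) i) ∧
      ∀ i : ℕ, Even i → layer (M : Set G) i * (M : Set G) ⊆
        layer (M : Set G) (i - 1) ∪ layer (M : Set G) i ∪ layer (M : Set G) (i + 1) := by
  constructor
  · rintro i hi x ⟨a, ha, m, hm, rfl⟩
    rcases eq_or_ne i 1 with h1 | h1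
    · subst h1
      simp only [layer, if_pos rfl] at ha ⊢
      exact M.mul_mem ha hm
    · simp only [layer, if_neg h1] at ha ⊢
      obtain ⟨haP, haN⟩ := ha
      have hi3 : 3 ≤ i := by
        obtain ⟨k, rfl⟩ := hi; omega
      refine ⟨altProd_odd_mul M hi (Set.mul_mem_mul haP hm), fun hcon => haN ?_⟩
      exact cancel_even M (Nat.Odd.sub_odd hi odd_one) (by omega) hm hcon
  · rintro i hi x ⟨a, ha, m, hm, rfl⟩
    rcases eq_or_ne i 0 with rfl | h0
    · simp only [layer, if_neg (by norm_num : (0:ℕ) ≠ 1)] at ha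
      exact absurd ha.1 ha.2
    obtain ⟨j, rfl⟩ : ∃ j, i = j + 2 := by
      obtain ⟨k, rfl⟩ := hi; exact ⟨2 * k - 2, by omega⟩
    have hj : Even j := by
      rcases hi with ⟨k, hk⟩; exact ⟨k - 1, by omega⟩
    simp only [layer, if_neg (by omega : j + 2 ≠ 1)] at ha
    obtain ⟨haP, haN⟩ := ha
    have hsub : (j + 2) - 1 = j + 1 := by omega
    by_cases h1 : a * m ∈ altProd (M : Set G) (j + 1)
    · left; left
      rw [hsub]
      rcases eq_or_ne j 0 with rfl | hj0
      · simp only [layer, if_pos rfl]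
        have : altProd (M : Set G) 1 = (M : Set G) := by
          rw [show (1:ℕ) = 0 + 1 from rfl, altProd_succ_even (Even.zero)]
          simp [altProd]
        rwa [this] at h1
      · simp only [layer, if_neg (by omega : j + 1 ≠ 1)]
        refine ⟨h1, fun hcon => haN ?_⟩
        rw [hsub]
        exact altProd_mono_succ M j (cancel_even M hj hj0 hm hcon)
    · by_cases h2 : a * m ∈ altProd (M : Set G) (j + 2)
      · left; right
        simp only [layer, if_neg (by omega : j + 2 ≠ 1), hsub]
        exact ⟨h2, h1⟩
      · right
        simp only [layer, if_neg (by omega : j + 2 + 1 ≠ 1),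
          show (j + 2 + 1) - 1 = j + 2 from rfl]
        refine ⟨?_, h2⟩
        rw [altProd_succ_even (by exact hj.add (even_two) : Even (j + 2))]
        exact Set.mul_mem_mul haP hm
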